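/- Let N ≥ 3, 0 < μ ≤ 2, α < 0, and let j be an integer with 0 ≤ j ≤ ⌊(N-1)/2⌋. Then the function ω ↦ M[Φ_ω^j] is strictly increasing on (α²/(N-2j)², ∞). Moreover the infimum over ω of M[Φ_ω^j] equals 0 when j = 0 (the N-tail state can have arbitrarily small mass), while for every j ≥ 1 this infimum is strictly positive (equal to ((μ+1)^{1/μ}/μ)(α²/(N-2j)²)^{1/μ - 1/2} · 2j ∫₀¹ (1-t²)^{1/μ-1} dt). -/

import Mathlib

open Real MeasureTheory

/-- `sech y = 1 / cosh y`. -/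
noncomputable def sech (y : ℝ) : ℝ := 1 / Real.cosh y

/-- Inverse hyperbolic tangent. -/
noncomputable def artanh (x : ℝ) : ℝ := (1 / 2) * Real.log ((1 + x) / (1 - x))

/-- The half-line soliton profile `φ_{ω,a}(x) = [(μ+1)ω]^{1/(2μ)} sech^{1/μ}(μ√ω (x-a))`. -/
noncomputable def solProfile (μ ω a : ℝ) (x : ℝ) : ℝ :=
  ((μ + 1) * ω) ^ (1 / (2 * μ)) * sech (μ * Real.sqrt ω * (x - a)) ^ (1 / μ)

/-- `a^j = (1/(μ√ω)) arctanh(|α|/((N-2j)√ω))`. -/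
noncomputable def aCenter (μ α : ℝ) (N j : ℕ) (ω : ℝ) : ℝ :=
  (1 / (μ * Real.sqrt ω)) * _root_.artanh (|α| / (((N : ℝ) - 2 * j) * Real.sqrt ω))

/-- The stationary state `Φ_ω^j` with `j` bumps. -/
noncomputable def statState (μ α : ℝ) (N j : ℕ) (ω : ℝ) : Fin N → ℝ → ℝ := fun i =>
  if (i : ℕ) < j then solProfile μ ω (aCenter μ α N j ω)
  else solProfile μ ω (-(aCenter μ α N j ω))

/-- The mass `M[Ψ] = Σ_i ∫_0^∞ |ψ_i|² dx` of the stationary state `Φ_ω^j`. -/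
noncomputable def massState (μ α : ℝ) (N j : ℕ) (ω : ℝ) : ℝ :=
  ∑ i : Fin N, ∫ x in Set.Ioi (0 : ℝ), |statState μ α N j ω i x| ^ 2

/-!
The substitution `t = tanh (μ √ω (x - a))` turns the mass of one edge into
`((μ+1)^{1/μ}/μ) ω^{1/μ-1/2} ∫_{tanh(-μ√ω a)}^1 (1-t²)^{1/μ-1} dt`. At the centers `± a^j` we have
`tanh (μ √ω a^j) = h(ω) := |α| / ((N-2j) √ω)`, and since the weight is even,
`M[Φ_ω^j] = ((μ+1)^{1/μ}/μ) ω^{1/μ-1/2} (2j ∫_0^1 + (N-2j) ∫_{h(ω)}^1)`.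
For `μ ≤ 2` the power of `ω` is nondecreasing while `h` decreases, so the mass strictly increases.
As `ω ↓ α²/(N-2j)²` we get `h(ω) → 1`, the second integral vanishes, and the monotone limit,
i.e. the infimum, is the `2j`-term, which is `0` exactly when `j = 0`.
-/

open Set Filter Topology

theorem sech_pos (x : ℝ) : 0 < sech x := by
  unfold sech; positivity

theorem one_sub_tanh_sq (x : ℝ) : 1 - tanh x ^ 2 = sech x ^ 2 := by
  have := cosh_sq_sub_sinh_sq x
  have := (cosh_pos x).ne'
  rw [tanh_eq_sinh_div_cosh, sech]
  field_simp
  linarith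

theorem hasDerivAt_tanh (x : ℝ) : HasDerivAt tanh (sech x ^ 2) x := by
  have h := (hasDerivAt_sinh x).div (hasDerivAt_cosh x) (cosh_pos x).ne'
  rw [← show tanh = sinh / cosh from funext tanh_eq_sinh_div_cosh] at h
  refine h.congr_deriv ?_
  rw [← one_sub_tanh_sq, tanh_eq_sinh_div_cosh]
  have := (cosh_pos x).ne'
  field_simp

theorem strictMono_tanh : StrictMono tanh :=
  strictMono_of_deriv_pos fun x => (hasDerivAt_tanh x).deriv ▸ pow_pos (sech_pos x) 2

theorem image_tanh_Ioi (c : ℝ) : tanh '' Ioi c = Ioo (tanh c) 1 := by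
  ext t
  constructor
  · rintro ⟨x, hx, rfl⟩
    exact ⟨strictMono_tanh hx, tanh_lt_one x⟩
  · rintro ⟨hct, ht1⟩
    have ht : t ∈ Ioo (-1) 1 := ⟨(neg_one_lt_tanh c).trans hct, ht1⟩
    refine ⟨Real.artanh t, ?_, Real.tanh_artanh ht⟩
    rw [mem_Ioi, ← strictMono_tanh.lt_iff_lt, Real.tanh_artanh ht]
    exact hct

theorem artanh_eq_real_artanh {x : ℝ} (hx : x ∈ Ioo (-1) 1) : _root_.artanh x = Real.artanh x :=
  (Real.artanh_eq_half_log (Ioo_subset_Icc_self hx)).symm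

theorem integral_Ioi_sech_rpow {k : ℝ} (hk : 0 < k) (a p : ℝ) :
    k * ∫ x in Ioi 0, sech (k * (x - a)) ^ (2 * p)
      = ∫ t in tanh (-(k * a))..1, (1 - t ^ 2) ^ (p - 1) := by
  have himage : (fun x => tanh (k * (x - a))) '' Ioi 0 = Ioo (tanh (-(k * a))) 1 := by
    rw [show (fun x => tanh (k * (x - a))) = tanh ∘ (k * ·) ∘ (· + -a) by
        ext x; simp [sub_eq_add_neg],
      image_comp, image_comp, image_add_const_Ioi, image_mul_left_Ioi hk, image_tanh_Ioi]
    ring_nf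
  have hderiv (x : ℝ) : HasDerivAt (fun x => tanh (k * (x - a))) (sech (k * (x - a)) ^ 2 * k) x :=
    (hasDerivAt_tanh _).comp x
      ((((hasDerivAt_id x).sub_const a).const_mul k).congr_deriv (by simp))
  rw [intervalIntegral.integral_of_le (tanh_lt_one _).le, integral_Ioc_eq_integral_Ioo, ← himage,
    integral_image_eq_integral_abs_deriv_smul measurableSet_Ioi
      (fun x _ => (hderiv x).hasDerivWithinAt)
      (strictMono_tanh.injective.comp
        ((mul_right_injective₀ hk.ne').comp sub_left_injective)).injOn,
    ← integral_const_mul]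
  refine setIntegral_congr_fun measurableSet_Ioi fun x _ => ?_
  have hs := sech_pos (k * (x - a))
  rw [one_sub_tanh_sq, smul_eq_mul, abs_of_pos (by positivity), ← rpow_natCast, ← rpow_mul hs.le,
    mul_comm _ k, mul_assoc, ← rpow_add hs]
  congr 2
  push_cast
  ring

theorem intervalIntegrable_one_sub_sq_rpow {p a b : ℝ} (hp : 0 < p) (ha : a ∈ Ioc (-1) 1)
    (hb : b ∈ Ioc (-1) 1) :
    IntervalIntegrable (fun t => (1 - t ^ 2) ^ (p - 1)) volume a b := by
  suffices key : ∀ c ∈ Ioc (-1 : ℝ) 1,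
      IntervalIntegrable (fun t => (1 - t ^ 2) ^ (p - 1)) volume c 1 from
    (key a ha).trans (key b hb).symm
  rintro c ⟨hc, hc1⟩
  have hsing : IntervalIntegrable (fun t => (1 - t) ^ (p - 1)) volume c 1 := by
    simpa using (intervalIntegral.intervalIntegrable_rpow' (a := 1 - c) (b := 0)
      (by linarith : -1 < p - 1)).comp_sub_left 1
  have hreg : ContinuousOn (fun t : ℝ => (1 + t) ^ (p - 1)) (uIcc c 1) := by
    rw [uIcc_of_le hc1]
    exact fun t ht => ContinuousAt.continuousWithinAt <|
      ContinuousAt.rpow_const (by fun_prop) (Or.inl (by linarith [ht.1]))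
  refine (hsing.mul_continuousOn hreg).congr ?_
  intro t ht
  rw [uIoc_of_le hc1] at ht
  show (1 - t) ^ (p - 1) * (1 + t) ^ (p - 1) = (1 - t ^ 2) ^ (p - 1)
  rw [← mul_rpow (by linarith [ht.2]) (by linarith [ht.1])]
  ring_nf

theorem Fin.sum_ite_val_lt {N j : ℕ} (hj : j ≤ N) (c₁ c₂ : ℝ) :
    ∑ i : Fin N, (if (i : ℕ) < j then c₁ else c₂) = j * c₁ + ((N : ℝ) - j) * c₂ := by
  rw [Finset.sum_ite, Finset.sum_const, Finset.sum_const, Finset.filter_not,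
    Finset.card_sdiff_of_subset (Finset.filter_subset _ _), Fin.card_filter_val_lt,
    min_eq_right hj]
  simp [Nat.cast_sub hj]

theorem integral_neg_eq_two_mul_sub_of_even {g : ℝ → ℝ} (hg : ∀ t, g (-t) = g t) {a b : ℝ}
    (h₁ : IntervalIntegrable g volume (-a) b) (h₂ : IntervalIntegrable g volume 0 b)
    (h₃ : IntervalIntegrable g volume a b) :
    ∫ t in -a..b, g t = 2 * (∫ t in (0 : ℝ)..b, g t) - ∫ t in a..b, g t := by
  have hneg : ∫ t in -a..0, g t = ∫ t in (0 : ℝ)..a, g t := by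
    simpa [hg] using (intervalIntegral.integral_comp_neg (a := 0) (b := a) g).symm
  have hsub := intervalIntegral.integral_interval_sub_left h₂ (h₂.trans h₃.symm)
  rw [← intervalIntegral.integral_add_adjacent_intervals (h₁.trans h₂.symm) h₂, hneg]
  linarith

theorem strictAntiOn_integral_one_sub_sq_rpow {p : ℝ} (hp : 0 < p) :
    StrictAntiOn (fun s => ∫ t in s..1, (1 - t ^ 2) ^ (p - 1)) (Ioc (-1) 1) := by
  intro s hs s' hs' hss'
  have hpos : 0 < ∫ t in s..s', (1 - t ^ 2) ^ (p - 1) :=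
    intervalIntegral.intervalIntegral_pos_of_pos_on (intervalIntegrable_one_sub_sq_rpow hp hs hs')
      (fun t ht => rpow_pos_of_pos (by nlinarith [hs.1, hs'.2, ht.1, ht.2]) _) hss'
  dsimp only
  rw [← intervalIntegral.integral_add_adjacent_intervals
    (intervalIntegrable_one_sub_sq_rpow hp hs hs')
    (intervalIntegrable_one_sub_sq_rpow hp hs' ⟨by linarith [hs'.1], le_rfl⟩)]
  linarith

theorem continuousWithinAt_integral_one_sub_sq_rpow {p : ℝ} (hp : 0 < p) :
    ContinuousWithinAt (fun s => ∫ t in s..1, (1 - t ^ 2) ^ (p - 1)) (Icc 0 1) 1 := by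
  have h := intervalIntegrable_one_sub_sq_rpow hp (a := 0) (b := 1) ⟨by norm_num, by norm_num⟩
    ⟨by norm_num, le_rfl⟩
  rw [intervalIntegrable_iff_integrableOn_Icc_of_le zero_le_one, ← uIcc_of_le zero_le_one] at h
  have := intervalIntegral.continuousOn_primitive_interval_left h
  rw [uIcc_of_le zero_le_one] at this
  exact this 1 ⟨zero_le_one, le_rfl⟩

theorem integral_sq_solProfile {μ ω : ℝ} (hμ : 0 < μ) (hω : 0 < ω) (a : ℝ) :
    ∫ x in Ioi 0, |solProfile μ ω a x| ^ 2 =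
      (μ + 1) ^ (1 / μ) / μ * ω ^ (1 / μ - 1 / 2) *
        ∫ t in tanh (-(μ * √ω * a))..1, (1 - t ^ 2) ^ (1 / μ - 1) := by
  have hk : 0 < μ * √ω := by positivity
  have hsq (x : ℝ) : |solProfile μ ω a x| ^ 2
      = ((μ + 1) * ω) ^ (1 / μ) * sech (μ * √ω * (x - a)) ^ (2 * (1 / μ)) := by
    have hs := sech_pos (μ * √ω * (x - a))
    rw [solProfile, abs_of_nonneg (by positivity), mul_pow, ← rpow_natCast, ← rpow_natCast (_ ^ _),
      ← rpow_mul (by positivity), ← rpow_mul hs.le]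
    congr 2 <;> field_simp <;> norm_num
  simp_rw [hsq]
  rw [integral_const_mul, ← integral_Ioi_sech_rpow hk, mul_rpow (by positivity) hω.le, sqrt_eq_rpow,
    show ω ^ (1 / μ) = ω ^ (1 / μ - 1 / 2) * ω ^ (1 / 2 : ℝ) by rw [← rpow_add hω]; ring_nf]
  field_simp

theorem integral_one_sub_sq_rpow_pos {p s : ℝ} (hp : 0 < p) (hs : s ∈ Ioo (-1) 1) :
    0 < ∫ t in s..1, (1 - t ^ 2) ^ (p - 1) :=
  intervalIntegral.intervalIntegral_pos_of_pos_on
    (intervalIntegrable_one_sub_sq_rpow hp (Ioo_subset_Ioc_self hs) ⟨by linarith [hs.1], le_rfl⟩)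
    (fun t ht => rpow_pos_of_pos (by nlinarith [hs.1, ht.1, ht.2]) _) hs.2

/-- `tanh (μ √ω a^j)`, by the definition of `a^j`. -/
noncomputable def tanhCenter (α : ℝ) (N j : ℕ) (ω : ℝ) : ℝ :=
  |α| / (((N : ℝ) - 2 * j) * √ω)

section StationaryState

variable {μ α ω : ℝ} {N j : ℕ}

theorem cast_sub_two_mul_pos (hjN : 2 * j < N) : (0 : ℝ) < N - 2 * j := by
  rw [sub_pos]; exact_mod_cast hjN

theorem threshold_pos (hα : α ≠ 0) (hjN : 2 * j < N) : 0 < α ^ 2 / ((N : ℝ) - 2 * j) ^ 2 := by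
  have hm := cast_sub_two_mul_pos hjN
  positivity

theorem tanhCenter_mem_Ioo (hα : α ≠ 0) (hjN : 2 * j < N)
    (hω : α ^ 2 / ((N : ℝ) - 2 * j) ^ 2 < ω) : tanhCenter α N j ω ∈ Ioo 0 1 := by
  have hm := cast_sub_two_mul_pos hjN
  have hω0 : 0 < ω := lt_of_le_of_lt (by positivity) hω
  refine ⟨by unfold tanhCenter; positivity, (div_lt_one (by positivity)).2 ?_⟩
  rw [div_lt_iff₀ (by positivity)] at hω
  apply abs_lt_of_sq_lt_sq _ (by positivity)
  rwa [mul_pow, sq_sqrt hω0.le, mul_comm]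

theorem tanhCenter_threshold (hα : α ≠ 0) (hjN : 2 * j < N) :
    tanhCenter α N j (α ^ 2 / ((N : ℝ) - 2 * j) ^ 2) = 1 := by
  have hm := cast_sub_two_mul_pos hjN
  rw [tanhCenter, ← sq_abs α, ← div_pow, sqrt_sq (by positivity)]
  field_simp

theorem strictAntiOn_tanhCenter (hα : α ≠ 0) (hjN : 2 * j < N) :
    StrictAntiOn (tanhCenter α N j) (Ioi 0) := by
  have hm := cast_sub_two_mul_pos hjN
  intro ω₁ hω₁ ω₂ hω₂ hlt
  exact div_lt_div_of_pos_left (by positivity) (by have := sqrt_pos.2 hω₁; positivity)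
    (mul_lt_mul_of_pos_left (sqrt_lt_sqrt (le_of_lt hω₁) hlt) hm)

theorem tanh_mul_aCenter (hμ : 0 < μ) (hω : 0 < ω) (h : tanhCenter α N j ω ∈ Ioo (-1) 1) :
    tanh (μ * √ω * aCenter μ α N j ω) = tanhCenter α N j ω := by
  have : μ * √ω ≠ 0 := by positivity
  rw [aCenter, ← mul_assoc, mul_one_div_cancel this, one_mul]
  exact (artanh_eq_real_artanh h).symm ▸ Real.tanh_artanh h

theorem massState_nonneg : 0 ≤ massState μ α N j ω :=
  Finset.sum_nonneg fun _ _ => setIntegral_nonneg measurableSet_Ioi fun _ _ => by positivity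

theorem massState_eq (hμ : 0 < μ) (hα : α < 0) (hjN : 2 * j < N)
    (hω : α ^ 2 / ((N : ℝ) - 2 * j) ^ 2 < ω) :
    massState μ α N j ω = (μ + 1) ^ (1 / μ) / μ * ω ^ (1 / μ - 1 / 2) *
      (2 * j * (∫ t in (0 : ℝ)..1, (1 - t ^ 2) ^ (1 / μ - 1)) +
        ((N : ℝ) - 2 * j) * ∫ t in tanhCenter α N j ω..1, (1 - t ^ 2) ^ (1 / μ - 1)) := by
  have hω0 : 0 < ω := lt_of_le_of_lt (by positivity) hω
  obtain ⟨h0, h1⟩ := tanhCenter_mem_Ioo hα.ne hjN hω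
  have hcenter := tanh_mul_aCenter hμ hω0 (α := α) (N := N) (j := j) ⟨by linarith, h1⟩
  set h := tanhCenter α N j ω
  have hI {c : ℝ} (hc : c ∈ Ioc (-1) 1) :=
    intervalIntegrable_one_sub_sq_rpow (one_div_pos.2 hμ) hc ⟨by norm_num, le_rfl⟩
  have hsymm := integral_neg_eq_two_mul_sub_of_even (fun t => by simp only [neg_sq])
    (hI ⟨by linarith, by linarith⟩) (hI ⟨by norm_num, zero_le_one⟩) (hI ⟨by linarith, h1.le⟩)
  have hcomp (i : Fin N) : ∫ x in Ioi 0, |statState μ α N j ω i x| ^ 2 =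
      (μ + 1) ^ (1 / μ) / μ * ω ^ (1 / μ - 1 / 2) *
        if (i : ℕ) < j then ∫ t in -h..1, (1 - t ^ 2) ^ (1 / μ - 1)
        else ∫ t in h..1, (1 - t ^ 2) ^ (1 / μ - 1) := by
    unfold statState
    split_ifs
    · rw [integral_sq_solProfile hμ hω0, tanh_neg, hcenter]
    · rw [integral_sq_solProfile hμ hω0, mul_neg, neg_neg, hcenter]
  rw [massState, Finset.sum_congr rfl fun i _ => hcomp i, ← Finset.mul_sum,
    Fin.sum_ite_val_lt (by omega), hsymm]
  ring

theorem strictMonoOn_massState (hμ0 : 0 < μ) (hμ2 : μ ≤ 2) (hα : α < 0) (hjN : 2 * j < N) :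
    StrictMonoOn (massState μ α N j) (Ioi (α ^ 2 / ((N : ℝ) - 2 * j) ^ 2)) := by
  have hp : 0 < 1 / μ := one_div_pos.2 hμ0
  have hq : 0 ≤ 1 / μ - 1 / 2 := by
    rw [sub_nonneg]; exact one_div_le_one_div_of_le hμ0 hμ2
  have hm := cast_sub_two_mul_pos hjN
  have hI := integral_one_sub_sq_rpow_pos hp (s := 0) ⟨by norm_num, by norm_num⟩
  intro ω₁ hω₁ ω₂ hω₂ hlt
  have hω₁0 : 0 < ω₁ := lt_of_le_of_lt (by positivity) hω₁
  obtain ⟨h₁0, h₁1⟩ := tanhCenter_mem_Ioo hα.ne hjN hω₁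
  obtain ⟨h₂0, h₂1⟩ := tanhCenter_mem_Ioo hα.ne hjN hω₂
  have hω₂0 : 0 < ω₂ := hω₁0.trans hlt
  have hcenter := strictAntiOn_tanhCenter hα.ne hjN hω₁0 hω₂0 hlt
  have hT := strictAntiOn_integral_one_sub_sq_rpow hp ⟨by linarith, h₂1.le⟩ ⟨by linarith, h₁1.le⟩
    hcenter
  have hT₁ := integral_one_sub_sq_rpow_pos hp ⟨by linarith, h₁1⟩
  rw [massState_eq hμ0 hα hjN hω₁, massState_eq hμ0 hα hjN hω₂]
  exact mul_lt_mul' (by gcongr) (by gcongr)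
    (add_nonneg (mul_nonneg (by positivity) hI.le) (mul_nonneg hm.le hT₁.le)) (by positivity)

theorem tendsto_massState (hμ : 0 < μ) (hα : α < 0) (hjN : 2 * j < N) :
    Tendsto (massState μ α N j) (𝓝[>] (α ^ 2 / ((N : ℝ) - 2 * j) ^ 2))
      (𝓝 ((μ + 1) ^ (1 / μ) / μ * (α ^ 2 / ((N : ℝ) - 2 * j) ^ 2) ^ (1 / μ - 1 / 2) *
        (2 * j * ∫ t in (0 : ℝ)..1, (1 - t ^ 2) ^ (1 / μ - 1)))) := by
  set ωc := α ^ 2 / ((N : ℝ) - 2 * j) ^ 2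
  have hm := cast_sub_two_mul_pos hjN
  have hωc : 0 < ωc := threshold_pos hα.ne hjN
  have hcenter : Tendsto (tanhCenter α N j) (𝓝[>] ωc) (𝓝[Icc 0 1] 1) := by
    refine tendsto_nhdsWithin_iff.2 ⟨?_, eventually_nhdsWithin_of_forall fun ω hω =>
      Ioo_subset_Icc_self (tanhCenter_mem_Ioo hα.ne hjN hω)⟩
    rw [← tanhCenter_threshold hα.ne hjN]
    refine (ContinuousAt.tendsto ?_).mono_left nhdsWithin_le_nhds
    exact continuousAt_const.div (continuousAt_const.mul continuous_sqrt.continuousAt)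
      (by have := sqrt_pos.2 hωc; positivity)
  have hT := (continuousWithinAt_integral_one_sub_sq_rpow (one_div_pos.2 hμ)).tendsto.comp hcenter
  have hpow : Tendsto (fun ω => (μ + 1) ^ (1 / μ) / μ * ω ^ (1 / μ - 1 / 2)) (𝓝[>] ωc)
      (𝓝 ((μ + 1) ^ (1 / μ) / μ * ωc ^ (1 / μ - 1 / 2))) :=
    (continuousAt_const.mul (continuousAt_rpow_const _ _ (Or.inl hωc.ne'))).tendsto.mono_left
      nhdsWithin_le_nhds
  have hlim := hpow.mul ((tendsto_const_nhds (x := 2 * (j : ℝ) * ∫ t in (0 : ℝ)..1,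
    (1 - t ^ 2) ^ (1 / μ - 1))).add ((tendsto_const_nhds (x := (N : ℝ) - 2 * j)).mul hT))
  rw [intervalIntegral.integral_same, mul_zero, add_zero] at hlim
  exact hlim.congr' (eventually_nhdsWithin_of_forall fun ω hω => (massState_eq hμ hα hjN hω).symm)

end StationaryState

/-- for `0 < μ ≤ 2`, `α < 0` and `0 ≤ j ≤ ⌊(N-1)/2⌋`, the map
`ω ↦ M[Φ_ω^j]` is strictly increasing on `(α²/(N-2j)², ∞)`; its infimum is `0` for `j = 0`
while for `j ≥ 1` it is strictly positive, equal to
`((μ+1)^{1/μ}/μ)(α²/(N-2j)²)^{1/μ-1/2} · 2j ∫₀¹ (1-t²)^{1/μ-1} dt`. -/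
theorem mass_monotone_and_infimum (N : ℕ) (hN : 3 ≤ N) (μ α : ℝ)
    (hμ0 : 0 < μ) (hμ2 : μ ≤ 2) (hα : α < 0) (j : ℕ) (hj : j ≤ (N - 1) / 2) :
    StrictMonoOn (massState μ α N j) (Set.Ioi (α ^ 2 / ((N : ℝ) - 2 * j) ^ 2)) ∧
    (j = 0 →
      sInf (massState μ α N j '' Set.Ioi (α ^ 2 / ((N : ℝ) - 2 * j) ^ 2)) = 0) ∧
    (1 ≤ j →
      sInf (massState μ α N j '' Set.Ioi (α ^ 2 / ((N : ℝ) - 2 * j) ^ 2))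
          = ((μ + 1) ^ (1 / μ) / μ) * (α ^ 2 / ((N : ℝ) - 2 * j) ^ 2) ^ (1 / μ - 1 / 2) *
            (2 * j * ∫ t in (0 : ℝ)..(1 : ℝ), (1 - t ^ 2) ^ (1 / μ - 1)) ∧
      0 < sInf (massState μ α N j '' Set.Ioi (α ^ 2 / ((N : ℝ) - 2 * j) ^ 2))) := by
  have hjN : 2 * j < N := by omega
  have hmono := strictMonoOn_massState hμ0 hμ2 hα hjN
  have hbdd : BddBelow (massState μ α N j '' Ioi (α ^ 2 / ((N : ℝ) - 2 * j) ^ 2)) :=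
    ⟨0, by rintro _ ⟨ω, -, rfl⟩; exact massState_nonneg⟩
  have hinf := tendsto_nhds_unique (hmono.monotoneOn.tendsto_nhdsGT hbdd)
    (tendsto_massState hμ0 hα hjN)
  have hI := integral_one_sub_sq_rpow_pos (one_div_pos.2 hμ0) (s := 0) ⟨by norm_num, by norm_num⟩
  refine ⟨hmono, fun hj0 => by rw [hinf, hj0]; simp, fun hj1 => ⟨hinf, ?_⟩⟩
  have hj1' : (0 : ℝ) < j := by exact_mod_cast hj1
  rw [hinf]
  exact mul_pos (mul_pos (by positivity) (rpow_pos_of_pos (threshold_pos hα.ne hjN) _))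
    (mul_pos (by positivity) hI)
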